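/- Let $0<\nu<1$, $a\in\mathbb{Z}$, $p:\mathbb{N}_a\to(0,\infty)$, $q:\mathbb{N}_{a+1}\to[0,\infty)$, $f:\mathbb{N}_{a+1}\to\mathbb{R}$, and $M\ge 0$. Assume (H1) $\sum_{s=a+1}^{\infty}\frac{1}{p(s)}\sum_{\tau=a+1}^{s}\frac{(s-\tau+1)^{\overline{\nu-1}}}{\Gamma(\nu)}q(\tau) < \infty$ and (H2) $\sum_{s=a+1}^{\infty}\frac{1}{p(s)}\sum_{\tau=a+1}^{s}\frac{(s-\tau+1)^{\overline{\nu-1}}}{\Gamma(\nu)}|f(\tau)| < \infty$. Then there exists $b\in\mathbb{N}_a$ such that the equation $\nabla_{b-1}^{\nu}(p\nabla y)(t)+q(t)y(t-1)=f(t)$, $t\in\mathbb{N}_{b+1}$, has a solution $y:\mathbb{N}_{b-1}\to\mathbb{R}$ with $\lim_{t\to\infty}y(t)=M$. -/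

import Mathlib

open Filter Finset

/-- Generalized rising function `x^{\overline r} = Γ(x+r)/Γ(x)` (with the usual
vanishing convention, since `Real.Gamma` vanishes at nonpositive integers and
division by zero is zero in Lean). -/
noncomputable def rfac (x r : ℝ) : ℝ := Real.Gamma (x + r) / Real.Gamma x

/-- Backward (nabla) difference. -/
def nbl (f : ℤ → ℝ) (t : ℤ) : ℝ := f t - f (t - 1)

/-- The `ν`-th order nabla fractional sum based at `a`. -/
noncomputable def nsum (ν : ℝ) (a : ℤ) (f : ℤ → ℝ) (t : ℤ) : ℝ :=
  (1 / Real.Gamma ν) * ∑ s ∈ Finset.Icc (a + 1) t, rfac ((t : ℝ) - (s : ℝ) + 1) (ν - 1) * f s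

/-- The `ν`-th order nabla fractional difference based at `a`, for `0 < ν < 1`. -/
noncomputable def ndiff (ν : ℝ) (a : ℤ) (f : ℤ → ℝ) (t : ℤ) : ℝ :=
  nbl (nsum (1 - ν) a f) t

/-! Put `w = f - q · y(· - 1)`. By the Chu–Vandermonde identity for the coefficients
`(j+1)^{\overline{μ-1}} / Γ(μ)`, nabla fractional sums satisfy the semigroup law
`∇_b^{-(1-ν)} ∇_b^{-ν} = ∇_b^{-1}`, so `∇_{b-1}^ν (p ∇y) = w` on `ℕ_{b+1}` as soon as
`p ∇y = ∇_b^{-ν} w` on `ℕ_b`. Summing `∇y` over `s > t` turns this into the fixed-point equation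
`y(t) = M - ∑_{s > t} ∇_b^{-ν} w(s) / p(s)`. By (H2) the right-hand side maps bounded `y` to
bounded functions, and by (H1) it is Lipschitz with constant the tail
`∑_{s ≥ b} ∇_a^{-ν} q(s) / p(s)`, which is `< 1` for `b` large. The fixed point tends to `M`
because the tails of the convergent majorant series tend to `0`.
-/

/-- `nablaCoeff μ j = (j+1)^{\overline{μ-1}} / Γ(μ)` is the coefficient of `x^j` in `(1-x)^{-μ}`. -/
noncomputable def nablaCoeff (μ : ℝ) (j : ℕ) : ℝ :=
  Real.Gamma (j + μ) / (Real.Gamma μ * Real.Gamma (j + 1))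

section NablaCoeff

variable {μ : ℝ}

lemma nablaCoeff_zero (hμ : 0 < μ) : nablaCoeff μ 0 = 1 := by
  simp [nablaCoeff, (Real.Gamma_pos_of_pos hμ).ne']

lemma nablaCoeff_one (j : ℕ) : nablaCoeff 1 j = 1 := by
  simp [nablaCoeff, (Real.Gamma_pos_of_pos (by positivity : (0 : ℝ) < j + 1)).ne']

lemma nablaCoeff_pos (hμ : 0 < μ) (j : ℕ) : 0 < nablaCoeff μ j := by
  unfold nablaCoeff
  have := Real.Gamma_pos_of_pos hμ
  have := Real.Gamma_pos_of_pos (by positivity : (0 : ℝ) < j + μ)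
  have := Real.Gamma_pos_of_pos (by positivity : (0 : ℝ) < j + 1)
  positivity

lemma succ_mul_nablaCoeff_succ (hμ : 0 < μ) (j : ℕ) :
    ((j : ℝ) + 1) * nablaCoeff μ (j + 1) = (j + μ) * nablaCoeff μ j := by
  have hΓ : Real.Gamma ((j : ℝ) + 1) ≠ 0 := (Real.Gamma_pos_of_pos (by positivity)).ne'
  have hΓμ : Real.Gamma μ ≠ 0 := (Real.Gamma_pos_of_pos hμ).ne'
  unfold nablaCoeff
  push_cast
  rw [add_right_comm, Real.Gamma_add_one (by positivity), Real.Gamma_add_one (by positivity)]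
  field_simp

/-- Chu–Vandermonde: `(1-x)^{-α} (1-x)^{-β} = (1-x)^{-(α+β)}`. -/
theorem sum_antidiagonal_nablaCoeff {α β : ℝ} (hα : 0 < α) (hβ : 0 < β) (n : ℕ) :
    ∑ ij ∈ antidiagonal n, nablaCoeff α ij.1 * nablaCoeff β ij.2 = nablaCoeff (α + β) n := by
  induction n with
  | zero => simp [nablaCoeff_zero hα, nablaCoeff_zero hβ, nablaCoeff_zero (add_pos hα hβ)]
  | succ n ih =>
    -- both sides `S n` satisfy `(n + 1) S (n + 1) = (n + α + β) S n`
    have hrec : ((n : ℝ) + 1) * ∑ ij ∈ antidiagonal (n + 1), nablaCoeff α ij.1 * nablaCoeff β ij.2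
        = (n + (α + β)) * ∑ ij ∈ antidiagonal n, nablaCoeff α ij.1 * nablaCoeff β ij.2 := by
      calc ((n : ℝ) + 1) * ∑ ij ∈ antidiagonal (n + 1), nablaCoeff α ij.1 * nablaCoeff β ij.2
          = ∑ ij ∈ antidiagonal (n + 1), (ij.1 * nablaCoeff α ij.1) * nablaCoeff β ij.2
            + ∑ ij ∈ antidiagonal (n + 1), nablaCoeff α ij.1 * (ij.2 * nablaCoeff β ij.2) := by
            rw [mul_sum, ← sum_add_distrib]
            refine sum_congr rfl fun ij hij => ?_
            have : (ij.1 : ℝ) + ij.2 = n + 1 := by exact_mod_cast mem_antidiagonal.mp hij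
            rw [← this]
            ring
        _ = ∑ ij ∈ antidiagonal n, ((ij.1 + α) * nablaCoeff α ij.1) * nablaCoeff β ij.2
            + ∑ ij ∈ antidiagonal n, nablaCoeff α ij.1 * ((ij.2 + β) * nablaCoeff β ij.2) := by
            rw [Nat.sum_antidiagonal_succ, Nat.sum_antidiagonal_succ']
            simp [succ_mul_nablaCoeff_succ hα, succ_mul_nablaCoeff_succ hβ]
        _ = _ := by
            rw [mul_sum, ← sum_add_distrib]
            refine sum_congr rfl fun ij hij => ?_
            have : (ij.1 : ℝ) + ij.2 = n := by exact_mod_cast mem_antidiagonal.mp hij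
            rw [← this]
            ring
    have hn : ((n : ℝ) + 1) ≠ 0 := by positivity
    apply mul_left_cancel₀ hn
    rw [hrec, ih, succ_mul_nablaCoeff_succ (add_pos hα hβ)]

end NablaCoeff

section FractionalSum

variable {μ ν : ℝ}

lemma rfac_div_Gamma_eq_nablaCoeff (μ : ℝ) (j : ℕ) :
    rfac ((j : ℝ) + 1) (μ - 1) / Real.Gamma μ = nablaCoeff μ j := by
  rw [rfac, nablaCoeff, div_div, mul_comm (Real.Gamma _)]
  ring_nf

lemma nsum_eq_sum_nablaCoeff (μ : ℝ) (c : ℤ) (g : ℤ → ℝ) (t : ℤ) :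
    nsum μ c g t = ∑ s ∈ Icc (c + 1) t, nablaCoeff μ (t - s).toNat * g s := by
  rw [nsum, mul_sum]
  refine sum_congr rfl fun s hs => ?_
  have hst : (((t - s).toNat : ℕ) : ℝ) = t - s := by
    rw [← Int.cast_natCast, Int.toNat_of_nonneg (by linarith [(mem_Icc.mp hs).2])]
    push_cast; ring
  rw [← rfac_div_Gamma_eq_nablaCoeff, hst]
  ring

lemma nsum_congr {g g' : ℤ → ℝ} {c : ℤ} (h : ∀ s, c + 1 ≤ s → g s = g' s) :
    nsum μ c g = nsum μ c g' := by
  ext t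
  exact congrArg _ (sum_congr rfl fun s hs => by rw [h s (mem_Icc.mp hs).1])

lemma nsum_add (c : ℤ) (g h : ℤ → ℝ) (t : ℤ) :
    nsum μ c (fun s => g s + h s) t = nsum μ c g t + nsum μ c h t := by
  simp only [nsum, mul_add, sum_add_distrib]

lemma nsum_sub (c : ℤ) (g h : ℤ → ℝ) (t : ℤ) :
    nsum μ c (fun s => g s - h s) t = nsum μ c g t - nsum μ c h t := by
  simp only [nsum, mul_sub, sum_sub_distrib]

lemma nsum_const_mul (c : ℤ) (C : ℝ) (g : ℤ → ℝ) (t : ℤ) :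
    nsum μ c (fun s => C * g s) t = C * nsum μ c g t := by
  simp only [nsum, mul_sum]
  exact sum_congr rfl fun _ _ => by ring

lemma nsum_nonneg (hμ : 0 < μ) {c : ℤ} {g : ℤ → ℝ} (hg : ∀ s, c + 1 ≤ s → 0 ≤ g s) (t : ℤ) :
    0 ≤ nsum μ c g t := by
  rw [nsum_eq_sum_nablaCoeff]
  exact sum_nonneg fun s hs => mul_nonneg (nablaCoeff_pos hμ _).le (hg s (mem_Icc.mp hs).1)

lemma abs_nsum_le (hμ : 0 < μ) {c c' : ℤ} (hc : c ≤ c') {g h : ℤ → ℝ}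
    (hgh : ∀ s, c + 1 ≤ s → |g s| ≤ h s) (t : ℤ) : |nsum μ c' g t| ≤ nsum μ c h t := by
  simp only [nsum_eq_sum_nablaCoeff]
  calc |∑ s ∈ Icc (c' + 1) t, nablaCoeff μ (t - s).toNat * g s|
      ≤ ∑ s ∈ Icc (c' + 1) t, nablaCoeff μ (t - s).toNat * h s := by
        refine (abs_sum_le_sum_abs _ _).trans (sum_le_sum fun s hs => ?_)
        rw [abs_mul, abs_of_pos (nablaCoeff_pos hμ _)]
        exact mul_le_mul_of_nonneg_left (hgh s (by linarith [(mem_Icc.mp hs).1]))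
          (nablaCoeff_pos hμ _).le
    _ ≤ ∑ s ∈ Icc (c + 1) t, nablaCoeff μ (t - s).toNat * h s :=
        sum_le_sum_of_subset_of_nonneg (Icc_subset_Icc_left (by linarith)) fun s hs _ =>
          mul_nonneg (nablaCoeff_pos hμ _).le ((abs_nonneg _).trans (hgh s (mem_Icc.mp hs).1))

lemma sum_Icc_nablaCoeff_mul_nablaCoeff (hμ : 0 < μ) (hν : 0 < ν) {τ t : ℤ} (hτt : τ ≤ t) :
    ∑ s ∈ Icc τ t, nablaCoeff μ (t - s).toNat * nablaCoeff ν (s - τ).toNat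
      = nablaCoeff (μ + ν) (t - τ).toNat := by
  rw [← sum_antidiagonal_nablaCoeff hμ hν]
  refine sum_nbij' (fun s => ((t - s).toNat, (s - τ).toNat)) (fun ij => τ + ij.2)
    ?_ ?_ ?_ ?_ fun _ _ => rfl
  all_goals intro x hx
  all_goals simp only [mem_Icc, HasAntidiagonal.mem_antidiagonal, Prod.ext_iff] at hx ⊢
  all_goals omega

theorem nsum_nsum (hμ : 0 < μ) (hν : 0 < ν) (c : ℤ) (w : ℤ → ℝ) (t : ℤ) :
    nsum μ c (nsum ν c w) t = nsum (μ + ν) c w t := by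
  simp only [nsum_eq_sum_nablaCoeff, mul_sum]
  rw [sum_comm' (t' := Icc (c + 1) t) (s' := fun τ => Icc τ t)
    (fun s τ => by simp only [mem_Icc]; omega)]
  refine sum_congr rfl fun τ hτ => ?_
  rw [← sum_Icc_nablaCoeff_mul_nablaCoeff hμ hν (mem_Icc.mp hτ).2, sum_mul]
  exact sum_congr rfl fun _ _ => by ring

lemma nsum_one (c : ℤ) (w : ℤ → ℝ) (t : ℤ) : nsum 1 c w t = ∑ s ∈ Icc (c + 1) t, w s := by
  simp [nsum_eq_sum_nablaCoeff, nablaCoeff_one]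

lemma nsum_sub_one_of_eq_zero {c : ℤ} {g : ℤ → ℝ} (hg : g c = 0) :
    nsum μ (c - 1) g = nsum μ c g := by
  ext t
  rw [nsum, nsum, sub_add_cancel]
  congr 1
  refine (sum_subset (Icc_subset_Icc_left (by omega)) fun s hs hs' => ?_).symm
  obtain rfl : s = c := by simp only [mem_Icc] at hs hs'; omega
  rw [hg, mul_zero]

theorem ndiff_nsum (hν₀ : 0 < ν) (hν₁ : ν < 1) {b t : ℤ} (ht : b + 1 ≤ t) (w : ℤ → ℝ) :
    ndiff ν (b - 1) (nsum ν b w) t = w t := by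
  have hsum : nsum (1 - ν) (b - 1) (nsum ν b w) = fun t => ∑ s ∈ Icc (b + 1) t, w s := by
    ext t
    rw [nsum_sub_one_of_eq_zero (by simp [nsum]), nsum_nsum (by linarith) hν₀, sub_add_cancel,
      nsum_one]
  rw [ndiff, hsum, nbl, ← insert_Icc_sub_one_right_eq_Icc ht,
    sum_insert (by simp), add_sub_cancel_right]

end FractionalSum

noncomputable def tailSum (u : ℤ → ℝ) (t : ℤ) : ℝ := ∑' k : ℕ, u (t + 1 + k)

def TailSummable (u : ℤ → ℝ) (t : ℤ) : Prop := Summable fun k : ℕ => u (t + 1 + k)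

section TailSum

variable {u v : ℤ → ℝ} {t t' : ℤ}

lemma tailSum_add_nat (u : ℤ → ℝ) (t : ℤ) (n : ℕ) :
    tailSum u (t + n) = ∑' k : ℕ, u (t + 1 + ↑(k + n)) := by
  refine tsum_congr fun k => ?_
  push_cast; ring_nf

lemma TailSummable.of_le (hu : TailSummable u t) (h : t ≤ t') : TailSummable u t' := by
  obtain ⟨n, rfl⟩ := Int.le.dest h
  refine ((summable_nat_add_iff n).mpr hu).congr fun k => ?_
  push_cast; ring_nf

lemma TailSummable.of_abs_le (hv : TailSummable v t) (h : ∀ s, t < s → |u s| ≤ v s) :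
    TailSummable u t :=
  Summable.of_norm_bounded hv fun k => h _ (by omega)

lemma abs_tailSum_le (hv : TailSummable v t) (h : ∀ s, t < s → |u s| ≤ v s) :
    |tailSum u t| ≤ tailSum v t := by
  have hu : Summable fun k : ℕ => ‖u (t + 1 + k)‖ :=
    Summable.of_nonneg_of_le (fun _ => norm_nonneg _) (fun k => h _ (by omega)) hv
  exact (norm_tsum_le_tsum_norm hu).trans (hu.tsum_le_tsum (fun k => h _ (by omega)) hv)

lemma tailSum_sub (hu : TailSummable u t) (hv : TailSummable v t) :
    tailSum u t - tailSum v t = tailSum (fun s => u s - v s) t :=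
  (hu.tsum_sub hv).symm

lemma tailSum_const_mul (C : ℝ) (u : ℤ → ℝ) (t : ℤ) :
    tailSum (fun s => C * u s) t = C * tailSum u t :=
  tsum_mul_left

lemma tailSum_sub_one (hu : TailSummable u t) : tailSum u (t - 1) = u t + tailSum u t := by
  have h : Summable fun k : ℕ => u (t + k) :=
    (summable_nat_add_iff 1).mp (hu.congr fun k => by push_cast; ring_nf)
  rw [tailSum, tailSum, sub_add_cancel, h.tsum_eq_zero_add]
  simp only [Nat.cast_zero, add_zero, Nat.cast_add, Nat.cast_one]
  exact congrArg _ (tsum_congr fun k => by ring_nf)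

lemma tailSum_nonneg (h : ∀ s, t < s → 0 ≤ u s) : 0 ≤ tailSum u t :=
  tsum_nonneg fun k => h _ (by omega)

lemma tailSum_le_tailSum_of_le (hu : TailSummable u t) (h : ∀ s, t < s → 0 ≤ u s) (htt' : t ≤ t') :
    tailSum u t' ≤ tailSum u t := by
  obtain ⟨n, rfl⟩ := Int.le.dest htt'
  rw [tailSum_add_nat, tailSum, ← hu.sum_add_tsum_nat_add n]
  exact le_add_of_nonneg_left (sum_nonneg fun k _ => h _ (by omega))

lemma TailSummable.add_const_mul (hu : TailSummable u t) (hv : TailSummable v t) (C : ℝ) :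
    TailSummable (fun s => u s + C * v s) t :=
  Summable.add hu (Summable.mul_left C hv)

-- No summability is needed: the tails of a non-summable series all have `tsum` zero.
lemma tendsto_tailSum (u : ℤ → ℝ) : Tendsto (tailSum u) atTop (nhds 0) := by
  have hshift : Tendsto (fun s : ℤ => s.toNat) atTop atTop :=
    tendsto_atTop_atTop.mpr fun n => ⟨n, fun s hs => by omega⟩
  refine ((tendsto_sum_nat_add fun k => u (1 + k)).comp hshift).congr' ?_
  filter_upwards [eventually_ge_atTop 0] with s hs
  obtain ⟨n, rfl⟩ := Int.le.dest hs
  simp only [zero_add, Function.comp_apply, Int.toNat_natCast]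
  exact tsum_congr fun k => by push_cast; ring_nf

lemma nbl_eq_of_eq_sub_tailSum {y : ℤ → ℝ} {M : ℝ} (hy : ∀ t, t' ≤ t → y t = M - tailSum u t)
    (hu : TailSummable u t) (ht : t' + 1 ≤ t) : nbl y t = u t := by
  rw [nbl, hy t (by omega), hy (t - 1) (by omega), tailSum_sub_one hu]
  ring

lemma tendsto_of_eq_sub_tailSum {y : ℤ → ℝ} {M : ℝ} (hy : ∀ t, t' ≤ t → y t = M - tailSum u t)
    (hv : TailSummable v t') (huv : ∀ s, t' < s → |u s| ≤ v s) : Tendsto y atTop (nhds M) := by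
  have hu : Tendsto (tailSum u) atTop (nhds 0) := by
    refine squeeze_zero_norm' ?_ (tendsto_tailSum v)
    filter_upwards [eventually_ge_atTop t'] with t ht
    exact abs_tailSum_le (hv.of_le ht) fun s hs => huv s (by omega)
  refine (by simpa using tendsto_const_nhds (x := M) |>.sub hu : Tendsto _ _ _).congr' ?_
  filter_upwards [eventually_ge_atTop t'] with t ht
  exact (hy t ht).symm

end TailSum

noncomputable def nsumDiv (ν : ℝ) (c : ℤ) (p g : ℤ → ℝ) (s : ℤ) : ℝ := nsum ν c g s / p s

lemma nsumDiv_add_one_add_nat (ν : ℝ) (a : ℤ) (p g : ℤ → ℝ) (k : ℕ) :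
    nsumDiv ν a p g (a + 1 + k) = 1 / p (a + 1 + k) * ∑ τ ∈ Icc (a + 1) (a + 1 + (k : ℤ)),
      rfac ((a : ℝ) + 1 + k - τ + 1) (ν - 1) / Real.Gamma ν * g τ := by
  rw [nsumDiv, nsum, mul_sum, mul_sum, sum_div]
  refine sum_congr rfl fun τ _ => ?_
  push_cast
  ring

/-- For a solution with `∇y(b) = 0`, `∇y(s) = (1/p(s)) ∇_b^{-ν}(f - q y(· - 1))(s)`. -/
noncomputable def increment (ν : ℝ) (b : ℤ) (p q f y : ℤ → ℝ) : ℤ → ℝ :=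
  nsumDiv ν b p fun τ => f τ - q τ * y (τ - 1)

section Solution

variable {ν : ℝ} {a b : ℤ} {p q f : ℤ → ℝ}

lemma abs_nsumDiv_le (hν : 0 < ν) {c c' s : ℤ} (hc : c ≤ c') (hps : 0 < p s) {g h : ℤ → ℝ}
    (hgh : ∀ τ, c + 1 ≤ τ → |g τ| ≤ h τ) : |nsumDiv ν c' p g s| ≤ nsumDiv ν c p h s := by
  rw [nsumDiv, nsumDiv, abs_div, abs_of_pos hps]
  exact div_le_div_of_nonneg_right (abs_nsum_le hν hc hgh s) hps.le

lemma abs_increment_le (hν : 0 < ν) (hab : a ≤ b) (hp : ∀ t, a ≤ t → 0 < p t)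
    (hq : ∀ t, a + 1 ≤ t → 0 ≤ q t) {y : ℤ → ℝ} {C : ℝ} (hy : ∀ t, |y t| ≤ C) {s : ℤ}
    (hs : a ≤ s) :
    |increment ν b p q f y s| ≤ nsumDiv ν a p (fun τ => |f τ|) s + C * nsumDiv ν a p q s := by
  calc |increment ν b p q f y s| ≤ nsumDiv ν a p (fun τ => |f τ| + C * q τ) s := by
        refine abs_nsumDiv_le hν hab (hp s hs) fun τ hτ => ?_
        calc |f τ - q τ * y (τ - 1)| ≤ |f τ| + q τ * |y (τ - 1)| :=
              (abs_sub _ _).trans_eq (by rw [abs_mul, abs_of_nonneg (hq τ hτ)])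
          _ ≤ |f τ| + C * q τ := by
              rw [mul_comm C]
              gcongr
              · exact hq τ hτ
              · exact hy _
    _ = _ := by simp only [nsumDiv, nsum_add, nsum_const_mul, add_div, mul_div_assoc]

lemma abs_increment_sub_le (hν : 0 < ν) (hab : a ≤ b) (hp : ∀ t, a ≤ t → 0 < p t)
    (hq : ∀ t, a + 1 ≤ t → 0 ≤ q t) {y y' : ℤ → ℝ} {C : ℝ} (hy : ∀ t, |y t - y' t| ≤ C)
    {s : ℤ} (hs : a ≤ s) :
    |increment ν b p q f y s - increment ν b p q f y' s| ≤ C * nsumDiv ν a p q s := by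
  have hsub : increment ν b p q f y s - increment ν b p q f y' s
      = nsumDiv ν b p (fun τ => q τ * (y' (τ - 1) - y (τ - 1))) s := by
    simp only [increment, nsumDiv, ← sub_div, ← nsum_sub]
    congr 2
    ext τ
    ring
  calc _ ≤ nsumDiv ν a p (fun τ => C * q τ) s := by
        rw [hsub]
        refine abs_nsumDiv_le hν hab (hp s hs) fun τ hτ => ?_
        rw [abs_mul, abs_of_nonneg (hq τ hτ), abs_sub_comm, mul_comm C]
        exact mul_le_mul_of_nonneg_left (hy _) (hq τ hτ)
    _ = _ := by rw [nsumDiv, nsum_const_mul, mul_div_assoc, nsumDiv]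

lemma tailSummable_increment (hν : 0 < ν) (hab : a ≤ b) (hp : ∀ t, a ≤ t → 0 < p t)
    (hq : ∀ t, a + 1 ≤ t → 0 ≤ q t) (hF : TailSummable (nsumDiv ν a p fun τ => |f τ|) a)
    (hQ : TailSummable (nsumDiv ν a p q) a) {y : ℤ → ℝ} {C : ℝ} (hy : ∀ t, |y t| ≤ C) {t : ℤ}
    (ht : a ≤ t) : TailSummable (increment ν b p q f y) t :=
  ((hF.add_const_mul hQ C).of_le ht).of_abs_le fun _ hs =>
    abs_increment_le hν hab hp hq hy (by omega)

lemma nsumDiv_nonneg (hν : 0 < ν) (hp : ∀ t, a ≤ t → 0 < p t) {g : ℤ → ℝ}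
    (hg : ∀ t, a + 1 ≤ t → 0 ≤ g t) {s : ℤ} (hs : a ≤ s) : 0 ≤ nsumDiv ν a p g s :=
  div_nonneg (nsum_nonneg hν hg s) (hp s hs).le

open BoundedContinuousFunction in
theorem exists_fixedPoint_increment (hν : 0 < ν) (hab : a < b) (hp : ∀ t, a ≤ t → 0 < p t)
    (hq : ∀ t, a + 1 ≤ t → 0 ≤ q t) (hF : TailSummable (nsumDiv ν a p fun τ => |f τ|) a)
    (hQ : TailSummable (nsumDiv ν a p q) a) (hK : tailSum (nsumDiv ν a p q) (b - 1) < 1)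
    (M : ℝ) : ∃ y : ℤ →ᵇ ℝ, ∀ t, b - 1 ≤ t → y t = M - tailSum (increment ν b p q f y) t := by
  set Q := nsumDiv ν a p q
  set F := nsumDiv ν a p fun τ => |f τ|
  have hba : a ≤ b - 1 := by omega
  have hQ₀ (s : ℤ) (hs : b - 1 < s) : 0 ≤ Q s := nsumDiv_nonneg hν hp hq (by omega)
  have hF₀ (s : ℤ) (hs : b - 1 < s) : 0 ≤ F s :=
    nsumDiv_nonneg hν hp (fun _ _ => abs_nonneg _) (by omega)
  have hnorm (y : ℤ →ᵇ ℝ) (t : ℤ) : |y t| ≤ ‖y‖ := y.norm_coe_le_norm t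
  have htail {y : ℤ → ℝ} {C : ℝ} (hy : ∀ t, |y t| ≤ C) {t : ℤ} (ht : b - 1 ≤ t) :=
    tailSummable_increment (f := f) hν hab.le hp hq hF hQ hy (hba.trans ht)
  -- the map `y ↦ M - ∑_{s > t} ∇y(s)`, continued as a constant to `t < b - 1`
  have hT (y : ℤ →ᵇ ℝ) : ∃ Y : ℤ →ᵇ ℝ,
      ∀ t, Y t = M - tailSum (increment ν b p q f y) (max (b - 1) t) := by
    refine ⟨ofNormedAddCommGroupDiscrete _ (|M| + tailSum (fun s => F s + ‖y‖ * Q s) (b - 1))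
      fun t => ?_, fun t => rfl⟩
    have ht := le_max_left (b - 1) t
    have hmaj := (hF.add_const_mul hQ ‖y‖).of_le hba
    refine (abs_sub _ _).trans (add_le_add_right ?_ _)
    calc _ ≤ tailSum (fun s => F s + ‖y‖ * Q s) (max (b - 1) t) :=
          abs_tailSum_le (hmaj.of_le ht) fun s hs =>
            abs_increment_le hν hab.le hp hq (hnorm y) (by omega)
      _ ≤ _ := tailSum_le_tailSum_of_le hmaj
          (fun s hs => add_nonneg (hF₀ s hs) (mul_nonneg (norm_nonneg _) (hQ₀ s hs))) ht
  choose T hT using hT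
  have hlip (y y' : ℤ →ᵇ ℝ) : dist (T y) (T y') ≤ tailSum Q (b - 1) * dist y y' := by
    refine (dist_le (mul_nonneg (tailSum_nonneg hQ₀) dist_nonneg)).mpr fun t => ?_
    have ht := le_max_left (b - 1) t
    have hyy' (t : ℤ) : |y t - y' t| ≤ dist y y' := Real.dist_eq _ _ ▸ dist_coe_le_dist t
    rw [hT, hT, Real.dist_eq, sub_sub_sub_cancel_left, abs_sub_comm,
      tailSum_sub (htail (hnorm y) ht) (htail (hnorm y') ht)]
    calc _ ≤ tailSum (fun s => dist y y' * Q s) (max (b - 1) t) :=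
          abs_tailSum_le (Summable.mul_left _ (hQ.of_le (hba.trans ht))) fun s hs =>
            abs_increment_sub_le hν hab.le hp hq hyy' (by omega)
      _ ≤ dist y y' * tailSum Q (b - 1) := by
          rw [tailSum_const_mul]
          exact mul_le_mul_of_nonneg_left
            (tailSum_le_tailSum_of_le (hQ.of_le hba) hQ₀ ht) dist_nonneg
      _ = _ := mul_comm _ _
  have hT_contr : ContractingWith ⟨_, tailSum_nonneg hQ₀⟩ T :=
    ⟨hK, LipschitzWith.of_dist_le_mul hlip⟩
  refine ⟨ContractingWith.fixedPoint T hT_contr, fun t ht => ?_⟩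
  conv_lhs => rw [← hT_contr.fixedPoint_isFixedPt]
  rw [hT, max_eq_right ht]

end Solution

theorem stmt16_general (ν : ℝ) (h1 : 0 < ν) (h2 : ν < 1) (a : ℤ) (p q f : ℤ → ℝ) (M : ℝ)
    (hp : ∀ t, a ≤ t → 0 < p t) (hq : ∀ t, a + 1 ≤ t → 0 ≤ q t)
    (hH1 : Summable (fun k : ℕ =>
      (1 / p (a + 1 + k)) * ∑ τ ∈ Finset.Icc (a + 1) (a + 1 + (k : ℤ)),
        rfac ((a : ℝ) + 1 + (k : ℝ) - (τ : ℝ) + 1) (ν - 1) / Real.Gamma ν * q τ))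
    (hH2 : Summable (fun k : ℕ =>
      (1 / p (a + 1 + k)) * ∑ τ ∈ Finset.Icc (a + 1) (a + 1 + (k : ℤ)),
        rfac ((a : ℝ) + 1 + (k : ℝ) - (τ : ℝ) + 1) (ν - 1) / Real.Gamma ν * |f τ|)) :
    ∃ b : ℤ, a ≤ b ∧ ∃ y : ℤ → ℝ,
      (∀ t, b + 1 ≤ t →
        ndiff ν (b - 1) (fun s => p s * nbl y s) t + q t * y (t - 1) = f t) ∧
      Filter.Tendsto y Filter.atTop (nhds M) := by
  have hQ : TailSummable (nsumDiv ν a p q) a :=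
    hH1.congr fun k => (nsumDiv_add_one_add_nat ν a p q k).symm
  have hF : TailSummable (nsumDiv ν a p fun τ => |f τ|) a :=
    hH2.congr fun k => (nsumDiv_add_one_add_nat ν a p _ k).symm
  obtain ⟨c, hac, hc⟩ := ((eventually_ge_atTop a).and
    ((tendsto_tailSum _).eventually (eventually_lt_nhds one_pos))).exists
  obtain ⟨y, hy⟩ := exists_fixedPoint_increment (b := c + 1) h1 (by omega) hp hq hF hQ
    (by simpa using hc) M
  have hy_le (t : ℤ) : |y t| ≤ ‖y‖ := y.norm_coe_le_norm t
  refine ⟨c + 1, by omega, y, fun t ht => ?_, ?_⟩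
  · have hpnbl (s : ℤ) (hs : c + 1 - 1 + 1 ≤ s) :
        p s * nbl y s = nsum ν (c + 1) (fun τ => f τ - q τ * y (τ - 1)) s := by
      rw [nbl_eq_of_eq_sub_tailSum hy (tailSummable_increment h1 (by omega) hp hq hF hQ hy_le
        (by omega)) hs, increment, nsumDiv, mul_div_cancel₀ _ (hp s (by omega)).ne']
    rw [ndiff, nsum_congr hpnbl, ← ndiff, ndiff_nsum h1 h2 ht, sub_add_cancel]
  · exact tendsto_of_eq_sub_tailSum hy ((hF.add_const_mul hQ _).of_le (by omega)) fun s _ =>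
      abs_increment_le h1 (by omega) hp hq hy_le (by omega)

theorem stmt16 (ν : ℝ) (h1 : 0 < ν) (h2 : ν < 1) (a : ℤ) (p q f : ℤ → ℝ) (M : ℝ)
    (hM : 0 ≤ M) (hp : ∀ t, a ≤ t → 0 < p t) (hq : ∀ t, a + 1 ≤ t → 0 ≤ q t)
    (hH1 : Summable (fun k : ℕ =>
      (1 / p (a + 1 + k)) * ∑ τ ∈ Finset.Icc (a + 1) (a + 1 + (k : ℤ)),
        rfac ((a : ℝ) + 1 + (k : ℝ) - (τ : ℝ) + 1) (ν - 1) / Real.Gamma ν * q τ))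
    (hH2 : Summable (fun k : ℕ =>
      (1 / p (a + 1 + k)) * ∑ τ ∈ Finset.Icc (a + 1) (a + 1 + (k : ℤ)),
        rfac ((a : ℝ) + 1 + (k : ℝ) - (τ : ℝ) + 1) (ν - 1) / Real.Gamma ν * |f τ|)) :
    ∃ b : ℤ, a ≤ b ∧ ∃ y : ℤ → ℝ,
      (∀ t, b + 1 ≤ t →
        ndiff ν (b - 1) (fun s => p s * nbl y s) t + q t * y (t - 1) = f t) ∧
      Filter.Tendsto y Filter.atTop (nhds M) :=
  stmt16_general ν h1 h2 a p q f M hp hq hH1 hH2
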